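/- Let k be even and G = G_0(u) ⋄ H(u) be a connected k-uniform hypergraph. Then λ_min(G_0) ≥ λ_min(G), with equality only if every first eigenvector y of G_0 satisfies y_u = 0. -/

import Mathlib

open Finset BigOperators

variable {V : Type*}

/-- A `k`-uniform hypergraph given by its edge set: every edge has exactly `k` vertices. -/
def Uniform [DecidableEq V] (E : Finset (Finset V)) (k : ℕ) : Prop :=
  ∀ e ∈ E, e.card = k

/-- Two vertices are adjacent if some edge contains both. -/
def HAdj [DecidableEq V] (E : Finset (Finset V)) (a b : V) : Prop :=
  a ≠ b ∧ ∃ e ∈ E, a ∈ e ∧ b ∈ e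

/-- The hypergraph is connected: every two vertices are joined by a walk. -/
def HConnected [DecidableEq V] (E : Finset (Finset V)) : Prop :=
  ∀ a b : V, Relation.ReflTransGen (HAdj E) a b

/-- `(lam, x)` satisfies the H-eigen equations of the adjacency tensor:
for each vertex `v`, `∑_{e ∋ v} ∏_{w ∈ e \ {v}} x w = lam * (x v)^(k-1)`. -/
def isEig [Fintype V] [DecidableEq V] (E : Finset (Finset V)) (k : ℕ) (lam : ℝ) (x : V → ℝ) :
    Prop :=
  ∀ v : V, (∑ e ∈ E.filter (fun e => v ∈ e), ∏ w ∈ e.erase v, x w) = lam * x v ^ (k - 1)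

/-- The set of H-eigenvalues of the adjacency tensor of the hypergraph. -/
def specH [Fintype V] [DecidableEq V] (E : Finset (Finset V)) (k : ℕ) : Set ℝ :=
  {lam | ∃ x : V → ℝ, x ≠ 0 ∧ isEig E k lam x}

/-- The least H-eigenvalue of the adjacency tensor. -/
noncomputable def lamMin [Fintype V] [DecidableEq V] (E : Finset (Finset V)) (k : ℕ) : ℝ :=
  sInf (specH E k)

/-- A first eigenvector: a real eigenvector associated with the least H-eigenvalue. -/
def IsFirstEigvec [Fintype V] [DecidableEq V] (E : Finset (Finset V)) (k : ℕ) (x : V → ℝ) :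
    Prop :=
  x ≠ 0 ∧ isEig E k (lamMin E k) x

/-! Write `N(x) = ∑ v, x v ^ k`. On the sphere `N(x) = 1`, compact because `k` is even, the form
`k ∑_e ∏_{v ∈ e} x v` attains a minimum `μ`. Rescaling gives `μ N(x) ≤ k ∑_e ∏_{v ∈ e} x v` for
all `x`, the minimizer is an eigenvector by the first-order condition, and an eigenvector of
`λ` turns the bound into `μ ≤ λ`; so `μ = λ_min`.

Given an eigenvector `y` of `G₀` for `λ`, keep `y` on `V(G₀)` and put `t` on the other vertices of
an edge of `H` through `u`. The form of `G` at this vector is `λ N(y) + k y_u t^(k-1)` and its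
power sum is at most `N(y) + k t^k`; as `λ_min(G) ≤ 0`, this gives
`λ_min(G) (N(y) + k t^k) ≤ λ N(y) + k y_u t^(k-1)`. For `t = 0` and `λ = λ_min(G₀)` this is the
inequality. Under equality the `N(y)` terms cancel, and since `k - 1` is odd a small `t` of sign
opposite to `y_u` violates what remains unless `y_u = 0`. -/

def edgeSum (E : Finset (Finset V)) (x : V → ℝ) : ℝ := ∑ e ∈ E, ∏ w ∈ e, x w

def powSum [Fintype V] (k : ℕ) (x : V → ℝ) : ℝ := ∑ v, x v ^ k

/-- The left-hand side of the eigen-equation at `v`, a sum over the link of `v`. -/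
def linkSum [DecidableEq V] (E : Finset (Finset V)) (v : V) (x : V → ℝ) : ℝ :=
  ∑ e ∈ E.filter (fun e => v ∈ e), ∏ w ∈ e.erase v, x w

theorem Uniform.mono [DecidableEq V] {E F : Finset (Finset V)} {k : ℕ} (hE : Uniform E k)
    (hFE : F ⊆ E) : Uniform F k :=
  fun e he => hE e (hFE he)

theorem edgeSum_union [DecidableEq V] {E F : Finset (Finset V)} (h : Disjoint E F)
    (x : V → ℝ) : edgeSum (E ∪ F) x = edgeSum E x + edgeSum F x :=
  sum_union h

theorem edgeSum_smul [DecidableEq V] {E : Finset (Finset V)} {k : ℕ} (hU : Uniform E k)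
    (c : ℝ) (x : V → ℝ) : edgeSum E (c • x) = c ^ k * edgeSum E x := by
  simp only [edgeSum, Pi.smul_apply, smul_eq_mul, prod_mul_distrib, prod_const, mul_sum]
  exact sum_congr rfl fun e he => by rw [hU e he]

theorem powSum_smul [Fintype V] (k : ℕ) (c : ℝ) (x : V → ℝ) :
    powSum k (c • x) = c ^ k * powSum k x := by
  simp only [powSum, Pi.smul_apply, smul_eq_mul, mul_pow, mul_sum]

theorem powSum_pos [Fintype V] {k : ℕ} (hk : Even k) {x : V → ℝ} (hx : x ≠ 0) :
    0 < powSum k x := by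
  obtain ⟨v, hv⟩ := Function.ne_iff.mp hx
  exact sum_pos' (fun w _ => hk.pow_nonneg (x w)) ⟨v, mem_univ v, hk.pow_pos hv⟩

theorem powSum_piecewise_le [Fintype V] {k : ℕ} (hk : Even k) (S : Finset V) [DecidablePred (· ∈ S)]
    (x y : V → ℝ) : powSum k (S.piecewise x y) ≤ powSum k x + powSum k y := by
  rw [powSum, powSum, powSum, ← sum_add_distrib]
  refine sum_le_sum fun v _ => ?_
  by_cases hv : v ∈ S
  · simpa [piecewise_eq_of_mem S x y hv] using hk.pow_nonneg (y v)
  · simpa [piecewise_eq_of_notMem S x y hv] using hk.pow_nonneg (x v)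

theorem sum_mul_linkSum [Fintype V] [DecidableEq V] (E : Finset (Finset V)) (x : V → ℝ) :
    ∑ v, x v * linkSum E v x = ∑ e ∈ E, (#e : ℝ) * ∏ w ∈ e, x w := by
  calc ∑ v, x v * linkSum E v x = ∑ v, ∑ e ∈ E, if v ∈ e then ∏ w ∈ e, x w else 0 := by
        refine sum_congr rfl fun v _ => ?_
        rw [linkSum, sum_filter, mul_sum]
        refine sum_congr rfl fun e _ => ?_
        split_ifs with hv
        · exact mul_prod_erase e x hv
        · exact mul_zero _
    _ = ∑ e ∈ E, (#e : ℝ) * ∏ w ∈ e, x w := by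
        rw [sum_comm]
        refine sum_congr rfl fun e _ => ?_
        rw [sum_ite_mem, univ_inter, sum_const, nsmul_eq_mul]

theorem isEig.mul_powSum [Fintype V] [DecidableEq V] {E : Finset (Finset V)} {k : ℕ} {lam : ℝ}
    {x : V → ℝ} (h : isEig E k lam x) (hU : Uniform E k) (hk0 : 0 < k) :
    lam * powSum k x = k * edgeSum E x := by
  have hv : ∀ v, x v * linkSum E v x = lam * x v ^ k := fun v => by
    rw [linkSum, h v, mul_left_comm, ← pow_succ', Nat.sub_add_cancel hk0]
  rw [powSum, mul_sum, ← sum_congr rfl fun v _ => hv v, sum_mul_linkSum, edgeSum, mul_sum]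
  exact sum_congr rfl fun e he => by rw [hU e he]

theorem edgeSum_update_add [DecidableEq V] (E : Finset (Finset V)) (v : V) (x : V → ℝ) (t : ℝ) :
    edgeSum E (Function.update x v (x v + t)) = edgeSum E x + t * linkSum E v x := by
  rw [linkSum, sum_filter, mul_sum, edgeSum, edgeSum, ← sum_add_distrib]
  refine sum_congr rfl fun e _ => ?_
  by_cases hv : v ∈ e
  · have hrest : ∏ w ∈ e.erase v, Function.update x v (x v + t) w = ∏ w ∈ e.erase v, x w :=
      prod_congr rfl fun w hw => Function.update_of_ne (ne_of_mem_erase hw) _ _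
    rw [if_pos hv, ← mul_prod_erase e _ hv, ← mul_prod_erase e x hv, hrest,
      Function.update_self]
    ring
  · rw [if_neg hv, mul_zero, add_zero]
    exact prod_congr rfl fun w hw => Function.update_of_ne (ne_of_mem_of_not_mem hw hv) _ _

theorem powSum_update [Fintype V] [DecidableEq V] (k : ℕ) (x : V → ℝ) (v : V) (a : ℝ) :
    powSum k (Function.update x v a) = powSum k x - x v ^ k + a ^ k := by
  have h : ∀ w, Function.update x v a w ^ k = Function.update (fun w => x w ^ k) v (a ^ k) w :=
    fun w => Function.apply_update (fun _ y => y ^ k) x v a w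
  rw [powSum, sum_congr rfl fun w _ => h w, sum_update_of_mem (mem_univ v), powSum,
    ← add_sum_erase _ _ (mem_univ v), sdiff_singleton_eq_erase]
  ring

theorem isCompact_powSum_eq_one [Fintype V] {k : ℕ} (hk : Even k) (hk0 : 0 < k) :
    IsCompact {x : V → ℝ | powSum k x = 1} := by
  refine (isCompact_closedBall (0 : V → ℝ) 1).of_isClosed_subset
    (isClosed_eq (continuous_finsetSum _ fun v _ => (continuous_apply v).pow k) continuous_const)
    fun x hx => ?_
  rw [Metric.mem_closedBall, dist_zero_right, pi_norm_le_iff_of_nonneg zero_le_one]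
  intro v
  have hv : |x v| ^ k ≤ 1 := by
    rw [hk.pow_abs, ← hx]
    exact single_le_sum (fun w _ => hk.pow_nonneg (x w)) (mem_univ v)
  rwa [Real.norm_eq_abs, ← pow_le_one_iff_of_nonneg (abs_nonneg _) hk0.ne']

theorem exists_isMinOn_edgeSum [Fintype V] [DecidableEq V] [Nonempty V] {k : ℕ} (hk : Even k)
    (hk0 : 0 < k) (E : Finset (Finset V)) :
    ∃ x₀, powSum k x₀ = 1 ∧ IsMinOn (edgeSum E) {x | powSum k x = 1} x₀ := by
  have hne : Pi.single (Classical.arbitrary V) 1 ∈ {x : V → ℝ | powSum k x = 1} := by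
    rw [Set.mem_ofPred_eq, powSum, sum_eq_single_of_mem _ (mem_univ _)
      fun w _ hw => by rw [Pi.single_eq_of_ne hw, zero_pow hk0.ne'], Pi.single_eq_same, one_pow]
  exact (isCompact_powSum_eq_one hk hk0).exists_isMinOn ⟨_, hne⟩
    (continuous_finsetSum _ fun e _ => continuous_finsetProd _ fun w _ =>
      continuous_apply w).continuousOn

theorem mul_powSum_le_of_isMinOn [Fintype V] [DecidableEq V] {E : Finset (Finset V)} {k : ℕ}
    (hk : Even k) (hk0 : 0 < k) (hU : Uniform E k) {x₀ : V → ℝ}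
    (hmin : IsMinOn (edgeSum E) {x | powSum k x = 1} x₀) (z : V → ℝ) :
    k * edgeSum E x₀ * powSum k z ≤ k * edgeSum E z := by
  rcases eq_or_ne z 0 with rfl | hz
  · have h0 := edgeSum_smul hU 0 0
    simp only [smul_zero, zero_pow hk0.ne', zero_mul] at h0
    simp [powSum, h0, zero_pow hk0.ne']
  have hpos := powSum_pos hk hz
  set c : ℝ := (powSum k z)⁻¹ ^ ((k : ℝ)⁻¹)
  have hc : c ^ k = (powSum k z)⁻¹ := Real.rpow_inv_natCast_pow (inv_nonneg.mpr hpos.le) hk0.ne'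
  have hle : edgeSum E x₀ ≤ (powSum k z)⁻¹ * edgeSum E z := by
    rw [← hc, ← edgeSum_smul hU]
    refine hmin ?_
    rw [Set.mem_ofPred_eq, powSum_smul, hc, inv_mul_cancel₀ hpos.ne']
  calc k * edgeSum E x₀ * powSum k z ≤ k * ((powSum k z)⁻¹ * edgeSum E z) * powSum k z := by
        gcongr
    _ = k * edgeSum E z := by field_simp

/-- The first-order condition in the direction of the coordinate `v` is the eigen-equation at `v`. -/
theorem isEig_of_forall_mul_powSum_le [Fintype V] [DecidableEq V] {E : Finset (Finset V)}
    {k : ℕ} (hk0 : 0 < k) {μ : ℝ} {x : V → ℝ}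
    (hle : ∀ z, μ * powSum k z ≤ k * edgeSum E z) (heq : μ * powSum k x = k * edgeSum E x) :
    isEig E k μ x := by
  intro v
  show linkSum E v x = μ * x v ^ (k - 1)
  let F : ℝ → ℝ := fun t =>
    k * (edgeSum E x + t * linkSum E v x) - μ * (powSum k x - x v ^ k + (x v + t) ^ k)
  have hF0 : F 0 = 0 := by
    simp only [F, zero_mul, add_zero, sub_add_cancel]
    linarith
  have hmin : IsLocalMin F 0 := Filter.Eventually.of_forall fun t => by
    have := hle (Function.update x v (x v + t))
    rw [edgeSum_update_add, powSum_update] at this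
    simp only [hF0, F]
    linarith
  have hderiv : HasDerivAt F (k * linkSum E v x - μ * (k * x v ^ (k - 1))) 0 := by
    have hpow : HasDerivAt (fun t : ℝ => (x v + t) ^ k) (k * x v ^ (k - 1)) 0 := by
      simpa using ((hasDerivAt_id (0 : ℝ)).const_add (x v)).fun_pow k
    have hlin : HasDerivAt (fun t : ℝ => t * linkSum E v x) (linkSum E v x) 0 := by
      simpa using (hasDerivAt_id (0 : ℝ)).mul_const (linkSum E v x)
    exact (hlin.const_add _).const_mul _ |>.sub ((hpow.const_add _).const_mul μ)
  have hk : (k : ℝ) ≠ 0 := by exact_mod_cast hk0.ne'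
  exact mul_left_cancel₀ hk (by linear_combination hmin.hasDerivAt_eq_zero hderiv)

theorem exists_isLeast_specH [Fintype V] [DecidableEq V] [Nonempty V] {E : Finset (Finset V)}
    {k : ℕ} (hk : Even k) (hk0 : 0 < k) (hU : Uniform E k) :
    ∃ μ, IsLeast (specH E k) μ ∧ ∀ z, μ * powSum k z ≤ k * edgeSum E z := by
  obtain ⟨x₀, hx₀, hmin⟩ := exists_isMinOn_edgeSum hk hk0 E
  have hle := mul_powSum_le_of_isMinOn hk hk0 hU hmin
  refine ⟨k * edgeSum E x₀, ⟨⟨x₀, ?_, isEig_of_forall_mul_powSum_le hk0 hle (by rw [hx₀, mul_one])⟩,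
    ?_⟩, hle⟩
  · rintro rfl
    simp [powSum, zero_pow hk0.ne'] at hx₀
  · rintro lam ⟨x, hx, hxe⟩
    exact le_of_mul_le_mul_right ((hle x).trans_eq (hxe.mul_powSum hU hk0).symm)
      (powSum_pos hk hx)

theorem lamMin_mem_specH [Fintype V] [DecidableEq V] [Nonempty V] {E : Finset (Finset V)}
    {k : ℕ} (hk : Even k) (hk0 : 0 < k) (hU : Uniform E k) : lamMin E k ∈ specH E k := by
  obtain ⟨μ, hμ, -⟩ := exists_isLeast_specH hk hk0 hU
  rw [lamMin, hμ.csInf_eq]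
  exact hμ.1

theorem lamMin_mul_powSum_le [Fintype V] [DecidableEq V] [Nonempty V] {E : Finset (Finset V)}
    {k : ℕ} (hk : Even k) (hk0 : 0 < k) (hU : Uniform E k) (z : V → ℝ) :
    lamMin E k * powSum k z ≤ k * edgeSum E z := by
  obtain ⟨μ, hμ, hle⟩ := exists_isLeast_specH hk hk0 hU
  rw [lamMin, hμ.csInf_eq]
  exact hle z

theorem lamMin_le_neg_one [Fintype V] [DecidableEq V] {E : Finset (Finset V)} {k : ℕ}
    (hk : Even k) (hk0 : 0 < k) (hU : Uniform E k) {e₁ : Finset V} (he₁ : e₁ ∈ E) :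
    lamMin E k ≤ -1 := by
  obtain ⟨w₁, hw₁⟩ : e₁.Nonempty := card_pos.mp (by rw [hU e₁ he₁]; exact hk0)
  have : Nonempty V := ⟨w₁⟩
  let z : V → ℝ := fun w => if w ∈ e₁ then (if w = w₁ then -1 else 1) else 0
  have hpow : powSum k z = k := by
    have hv : ∀ v, z v ^ k = if v ∈ e₁ then 1 else 0 := fun v => by
      by_cases hv : v ∈ e₁ <;> by_cases hvw : v = w₁ <;>
        simp [z, hv, hvw, hk.neg_one_pow, zero_pow hk0.ne']
    rw [powSum, sum_congr rfl fun v _ => hv v, sum_ite_mem, univ_inter, sum_const,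
      nsmul_eq_mul, mul_one, hU e₁ he₁]
  have hedge : edgeSum E z = -1 := by
    rw [edgeSum, sum_eq_single_of_mem e₁ he₁]
    · rw [← mul_prod_erase e₁ z hw₁, prod_eq_one fun w hw => by
        simp [z, ne_of_mem_erase hw, mem_of_mem_erase hw]]
      simp [z, hw₁]
    · intro e he hne
      obtain ⟨w, hwe, hwe₁⟩ := not_subset.mp fun hsub =>
        hne (eq_of_subset_of_card_le hsub (by rw [hU e₁ he₁, hU e he]))
      exact prod_eq_zero hwe (by simp [z, hwe₁])
  have h := lamMin_mul_powSum_le hk hk0 hU z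
  rw [hpow, hedge] at h
  have hkpos : (0 : ℝ) < k := by exact_mod_cast hk0
  nlinarith

theorem exists_mul_pow_succ_add_mul_pow_neg {n : ℕ} (hn : Odd n) {b c : ℝ} (hb : b ≠ 0)
    (hc : 0 ≤ c) : ∃ t : ℝ, c * t ^ (n + 1) + b * t ^ n < 0 := by
  refine ⟨-b / (c + 1), ?_⟩
  have hc1 : 0 < c + 1 := by linarith
  have hval : c * (-b / (c + 1)) ^ (n + 1) + b * (-b / (c + 1)) ^ n
      = -(b ^ (n + 1) / (c + 1) ^ (n + 1)) := by
    rw [div_pow, div_pow, hn.neg_pow, hn.add_one.neg_pow, pow_succ b, pow_succ (c + 1)]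
    field_simp
    ring
  rw [hval]
  exact neg_neg_of_pos (div_pos (hn.add_one.pow_pos hb) (pow_pos hc1 _))

section Coalescence

variable [DecidableEq V] {V0 VH : Finset V} {u : V} {E0 EH : Finset (Finset V)} {k : ℕ}

theorem mem_left_of_inter_eq_singleton (hI : V0 ∩ VH = {u}) : u ∈ V0 :=
  (mem_inter.mp (hI.symm ▸ mem_singleton_self u)).1

theorem notMem_of_inter_eq_singleton (hI : V0 ∩ VH = {u}) {w : V} (hw : w ∈ VH) (hwu : w ≠ u) :
    w ∉ V0 := fun hw0 =>
  hwu (mem_singleton.mp (hI ▸ mem_inter.mpr ⟨hw0, hw⟩))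

theorem exists_mem_right_of_hConnected (hI : V0 ∩ VH = {u}) (hE0 : ∀ e ∈ E0, e ⊆ V0)
    (hEH : ∀ e ∈ EH, e ⊆ VH) (hconn : HConnected (E0 ∪ EH)) {a : V} (ha : a ∉ V0) :
    ∃ e ∈ EH, u ∈ e := by
  -- a walk from outside `V₀` can only enter `V₀` through `u`, along an edge of `H`
  suffices ∀ b, Relation.ReflTransGen (HAdj (E0 ∪ EH)) a b → b ∉ V0 ∨ ∃ e ∈ EH, u ∈ e from
    (this u (hconn a u)).resolve_left (not_not.mpr (mem_left_of_inter_eq_singleton hI))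
  intro b hab
  induction hab with
  | refl => exact Or.inl ha
  | @tail p c _ hstep ih =>
    rcases ih with hp | hedge
    · obtain ⟨-, e, he, hpe, hce⟩ := hstep
      have heH : e ∈ EH := (mem_union.mp he).resolve_left fun he0 => hp (hE0 e he0 hpe)
      by_cases hcu : c = u
      · exact Or.inr ⟨e, heH, hcu ▸ hce⟩
      · exact Or.inl (notMem_of_inter_eq_singleton hI (hEH e heH hce) hcu)
    · exact Or.inr hedge

theorem lamMin_union_mul_le [Fintype V] (hk : Even k) (hk0 : 0 < k) (hI : V0 ∩ VH = {u})
    (hE0 : ∀ e ∈ E0, e ⊆ V0) (hEH : ∀ e ∈ EH, e ⊆ VH) (hU : Uniform (E0 ∪ EH) k)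
    {e₀ : Finset V} (he₀ : e₀ ∈ EH) (hue₀ : u ∈ e₀) {lam : ℝ} {y : V → ℝ}
    (hy : isEig E0 k lam y) (t : ℝ) :
    lamMin (E0 ∪ EH) k * (powSum k y + k * t ^ k) ≤ lam * powSum k y + k * (y u * t ^ (k - 1)) := by
  have : Nonempty V := ⟨u⟩
  have hUH : Uniform EH k := hU.mono subset_union_right
  have hdisj : Disjoint E0 EH := disjoint_left.mpr fun e he0 heH => by
    obtain ⟨w, hw, hwu⟩ := exists_mem_ne (by rw [hUH e heH]; exact Nat.le_of_dvd hk0 hk.two_dvd) u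
    exact notMem_of_inter_eq_singleton hI (hEH e heH hw) hwu (hE0 e he0 hw)
  let s : V → ℝ := fun w => if w ∈ e₀ then t else 0
  let z : V → ℝ := V0.piecewise y s
  have hz0 : edgeSum E0 z = edgeSum E0 y :=
    sum_congr rfl fun e he => prod_congr rfl fun w hw => piecewise_eq_of_mem _ _ _ (hE0 e he hw)
  have hzH : edgeSum EH z = y u * t ^ (k - 1) := by
    have hout : ∀ e ∈ EH, ∀ w ∈ e, w ≠ u → z w = s w := fun e he w hw hwu =>
      piecewise_eq_of_notMem _ _ _ (notMem_of_inter_eq_singleton hI (hEH e he hw) hwu)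
    rw [edgeSum, sum_eq_single_of_mem e₀ he₀]
    · have hzu : z u = y u := piecewise_eq_of_mem _ _ _ (mem_left_of_inter_eq_singleton hI)
      rw [← mul_prod_erase e₀ z hue₀, hzu,
        prod_congr rfl fun w hw => (hout e₀ he₀ w (mem_of_mem_erase hw) (ne_of_mem_erase hw)).trans
          (if_pos (mem_of_mem_erase hw)),
        prod_const, card_erase_of_mem hue₀, hUH e₀ he₀]
    · intro e he hne
      obtain ⟨w, hwe, hwe₀⟩ := not_subset.mp fun hsub =>
        hne (eq_of_subset_of_card_le hsub (by rw [hUH e₀ he₀, hUH e he]))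
      have hwu : w ≠ u := fun h => hwe₀ (h ▸ hue₀)
      exact prod_eq_zero hwe ((hout e he w hwe hwu).trans (if_neg hwe₀))
  have hs : powSum k s = k * t ^ k := by
    simp only [powSum, s, ite_pow, zero_pow hk0.ne']
    rw [sum_ite_mem, univ_inter, sum_const, nsmul_eq_mul, hUH e₀ he₀]
  have hneg : lamMin (E0 ∪ EH) k ≤ 0 :=
    (lamMin_le_neg_one hk hk0 hU (mem_union_right _ he₀)).trans (by norm_num)
  calc lamMin (E0 ∪ EH) k * (powSum k y + k * t ^ k) ≤ lamMin (E0 ∪ EH) k * powSum k z :=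
        mul_le_mul_of_nonpos_left (hs ▸ powSum_piecewise_le hk V0 y s) hneg
    _ ≤ k * edgeSum (E0 ∪ EH) z := lamMin_mul_powSum_le hk hk0 hU z
    _ = lam * powSum k y + k * (y u * t ^ (k - 1)) := by
        rw [edgeSum_union hdisj, hz0, hzH, mul_add, hy.mul_powSum (hU.mono subset_union_left) hk0]

end Coalescence

theorem stmt7_general [Fintype V] [DecidableEq V]
    (V0 VH : Finset V) (u : V) (E0 EH : Finset (Finset V)) (k : ℕ)
    (hk : Even k) (hk0 : 0 < k)
    (hI : V0 ∩ VH = {u})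
    (hE0 : ∀ e ∈ E0, e ⊆ V0) (hEH : ∀ e ∈ EH, e ⊆ VH)
    (hU : Uniform (E0 ∪ EH) k) (hconn : HConnected (E0 ∪ EH))
    (hEHne : EH.Nonempty)
    :
    lamMin (E0 ∪ EH) k ≤ lamMin E0 k ∧
    (lamMin E0 k = lamMin (E0 ∪ EH) k →
      ∀ y : V → ℝ, IsFirstEigvec E0 k y → y u = 0) := by
  have : Nonempty V := ⟨u⟩
  have hk1 : 1 < k := Nat.le_of_dvd hk0 hk.two_dvd
  obtain ⟨e₀, he₀, hue₀⟩ : ∃ e ∈ EH, u ∈ e := by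
    obtain ⟨e, he⟩ := hEHne
    obtain ⟨a, ha, hau⟩ := exists_mem_ne (hU.mono subset_union_right e he ▸ hk1) u
    exact exists_mem_right_of_hConnected hI hE0 hEH hconn
      (notMem_of_inter_eq_singleton hI (hEH e he ha) hau)
  have hneg : lamMin (E0 ∪ EH) k ≤ 0 :=
    (lamMin_le_neg_one hk hk0 hU (mem_union_right _ he₀)).trans (by norm_num)
  refine ⟨?_, fun heq y ⟨_, hy⟩ => ?_⟩
  · obtain ⟨y, hy0, hy⟩ := lamMin_mem_specH hk hk0 (hU.mono subset_union_left)
    have h := lamMin_union_mul_le hk hk0 hI hE0 hEH hU he₀ hue₀ hy 0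
    simp only [zero_pow hk0.ne', zero_pow (Nat.sub_ne_zero_of_lt hk1), mul_zero, add_zero] at h
    exact le_of_mul_le_mul_right h (powSum_pos hk hy0)
  · by_contra hyu
    have h := lamMin_union_mul_le hk hk0 hI hE0 hEH hU he₀ hue₀ hy
    obtain ⟨n, rfl⟩ := Nat.exists_eq_add_one.mpr hk0
    have hn : Odd n := Nat.not_even_iff_odd.mp (Nat.even_add_one.mp hk)
    obtain ⟨t, ht⟩ := exists_mul_pow_succ_add_mul_pow_neg hn hyu (neg_nonneg.mpr hneg)
    have ht' := h t
    rw [heq, Nat.add_sub_cancel] at ht'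
    have hk' : (0 : ℝ) < (n + 1 : ℕ) := by positivity
    linarith [mul_neg_of_pos_of_neg hk' ht]

/-- For the coalescence `G = G₀(u) ⋄ H(u)`, `λ_min(G₀) ≥ λ_min(G)`, with equality only if every first eigenvector `y` of `G₀` satisfies `y u = 0`. -/
theorem stmt7 [Fintype V] [DecidableEq V]
    (V0 VH : Finset V) (u : V) (E0 EH : Finset (Finset V)) (k : ℕ)
    (hk : Even k) (hk0 : 0 < k)
    (hI : V0 ∩ VH = {u}) (hcover : V0 ∪ VH = Finset.univ)
    (hE0 : ∀ e ∈ E0, e ⊆ V0) (hEH : ∀ e ∈ EH, e ⊆ VH)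
    (hU : Uniform (E0 ∪ EH) k) (hconn : HConnected (E0 ∪ EH))
    (hE0ne : E0.Nonempty) (hEHne : EH.Nonempty)
    :
    lamMin (E0 ∪ EH) k ≤ lamMin E0 k ∧
    (lamMin E0 k = lamMin (E0 ∪ EH) k →
      ∀ y : V → ℝ, IsFirstEigvec E0 k y → y u = 0) :=
  stmt7_general V0 VH u E0 EH k hk hk0 hI hE0 hEH hU hconn hEHne
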